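/- arXiv:2209.04405 — 2 statements merged into one kernel-verified Lean document; each statement's English description precedes it below -/
import Mathlib

section
/- Let A be a real symmetric positive semidefinite p×p matrix and U ∈ ℝᵖ a nonzero vector. Then the function g(λ) = Uᵀ(A + λI_p)⁻²U is well defined, continuous, and strictly decreasing on (0, ∞), and g(λ) → 0 as λ → ∞. Consequently, the Lagrangian-multiplier equation g(λ) = 1 has at most one solution λ ∈ (0, ∞). -/
open Matrix

/-- For a real symmetric positive semidefinite `p×p` matrix `A` and a nonzero
vector `U`, the function `g(λ) = Uᵀ(A + λI)⁻²U` is well defined (`A + λI` is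
invertible for `λ > 0`), continuous and strictly decreasing on `(0, ∞)`, and
tends to `0` as `λ → ∞`; consequently the equation `g(λ) = 1` has at most one
solution in `(0, ∞)`. -/
theorem pcma_lagrange_multiplier_equation
    {p : ℕ}
    (A : Matrix (Fin p) (Fin p) ℝ) (hA : A.PosSemidef)
    (U : Fin p → ℝ) (hU : U ≠ 0)
    (g : ℝ → ℝ)
    (hg : g = fun lam =>
      U ⬝ᵥ (((A + lam • (1 : Matrix (Fin p) (Fin p) ℝ))⁻¹ *
             (A + lam • (1 : Matrix (Fin p) (Fin p) ℝ))⁻¹).mulVec U)) :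
    (∀ lam ∈ Set.Ioi (0 : ℝ),
        IsUnit (A + lam • (1 : Matrix (Fin p) (Fin p) ℝ)).det) ∧
    ContinuousOn g (Set.Ioi (0 : ℝ)) ∧
    StrictAntiOn g (Set.Ioi (0 : ℝ)) ∧
    Filter.Tendsto g Filter.atTop (nhds 0) ∧
    (∀ lam1 ∈ Set.Ioi (0 : ℝ), ∀ lam2 ∈ Set.Ioi (0 : ℝ),
        g lam1 = 1 → g lam2 = 1 → lam1 = lam2) := by
  classical
  have hH := hA.isHermitian
  set V : Matrix (Fin p) (Fin p) ℝ := (hH.eigenvectorUnitary : Matrix (Fin p) (Fin p) ℝ) with hV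
  have hVW : V * star V = 1 := (Matrix.mem_unitaryGroup_iff).mp hH.eigenvectorUnitary.2
  have hWV : star V * V = 1 := (Matrix.mem_unitaryGroup_iff').mp hH.eigenvectorUnitary.2
  set d : Fin p → ℝ := hH.eigenvalues with hd
  have hdnn : ∀ i, 0 ≤ d i := fun i => hA.eigenvalues_nonneg i
  have hspec : A = V * diagonal d * star V := by simpa using hH.spectral_theorem
  set c : Fin p → ℝ := U ᵥ* V with hc
  -- c ≠ 0
  have hcne : c ≠ 0 := by
    intro h
    apply hU
    have : (U ᵥ* V) ᵥ* star V = U := by rw [vecMul_vecMul, hVW, vecMul_one]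
    rw [← this, ← hc, h, zero_vecMul]
  obtain ⟨i0, hi0⟩ : ∃ i, c i ≠ 0 := Function.ne_iff.mp hcne
  -- factorization of A + lam • 1
  have hfac : ∀ lam : ℝ, A + lam • (1 : Matrix (Fin p) (Fin p) ℝ)
      = V * diagonal (fun i => d i + lam) * star V := by
    intro lam
    have h1 : lam • (1 : Matrix (Fin p) (Fin p) ℝ) = V * diagonal (fun _ => lam) * star V := by
      rw [← smul_one_eq_diagonal]
      rw [Matrix.mul_smul, Matrix.smul_mul, mul_one, hVW]
    rw [h1]
    nth_rewrite 1 [hspec]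
    rw [← add_mul, ← mul_add, diagonal_add]
  -- the key formula
  have key : ∀ lam : ℝ, 0 < lam →
      g lam = ∑ i, c i ^ 2 * ((d i + lam)⁻¹ * (d i + lam)⁻¹) := by
    intro lam hlam
    have hne : ∀ i, d i + lam ≠ 0 := fun i =>
      ne_of_gt (add_pos_of_nonneg_of_pos (hdnn i) hlam)
    have hsand : ∀ (D E : Matrix (Fin p) (Fin p) ℝ),
        (V * D * star V) * (V * E * star V) = V * (D * E) * star V := by
      intro D E
      simp only [Matrix.mul_assoc]
      rw [← Matrix.mul_assoc (star V) V, hWV, one_mul]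
    have hinv : (A + lam • (1 : Matrix (Fin p) (Fin p) ℝ))⁻¹
        = V * diagonal (fun i => (d i + lam)⁻¹) * star V := by
      apply inv_eq_right_inv
      rw [hfac lam, hsand, diagonal_mul_diagonal]
      have : (fun i => (d i + lam) * (d i + lam)⁻¹) = fun _ => (1:ℝ) := by
        funext i; exact mul_inv_cancel₀ (hne i)
      rw [this, diagonal_one, mul_one, hVW]
    have hprod : (A + lam • (1 : Matrix (Fin p) (Fin p) ℝ))⁻¹ *
        (A + lam • (1 : Matrix (Fin p) (Fin p) ℝ))⁻¹
        = V * diagonal (fun i => (d i + lam)⁻¹ * (d i + lam)⁻¹) * star V := by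
      rw [hinv, hsand, diagonal_mul_diagonal]
    rw [hg]
    simp only [hprod]
    have hsW : (star V).mulVec U = c := by
      funext i
      simp [hc, Matrix.mulVec, Matrix.vecMul, dotProduct, mul_comm]
    rw [← Matrix.mulVec_mulVec, ← Matrix.mulVec_mulVec, hsW, Matrix.dotProduct_mulVec U V,
      ← hc]
    simp only [dotProduct, Matrix.mulVec_diagonal]
    exact Finset.sum_congr rfl fun i _ => by ring
  set G : ℝ → ℝ := fun lam => ∑ i, c i ^ 2 * ((d i + lam)⁻¹ * (d i + lam)⁻¹) with hGdef
  have hGanti : StrictAntiOn G (Set.Ioi (0 : ℝ)) := by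
    intro a ha b hb hab
    simp only [Set.mem_Ioi] at ha hb
    apply Finset.sum_lt_sum
    · intro i _
      have hpa : 0 < d i + a := add_pos_of_nonneg_of_pos (hdnn i) ha
      have hpb : 0 < d i + b := add_pos_of_nonneg_of_pos (hdnn i) hb
      have h1 : (d i + b)⁻¹ ≤ (d i + a)⁻¹ := by
        apply inv_anti₀ hpa (by linarith)
      have h2 : 0 ≤ (d i + b)⁻¹ := le_of_lt (inv_pos.mpr hpb)
      have h3 := mul_le_mul h1 h1 h2 (le_of_lt (inv_pos.mpr hpa))
      exact mul_le_mul_of_nonneg_left h3 (sq_nonneg _)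
    · refine ⟨i0, Finset.mem_univ _, ?_⟩
      have hpa : 0 < d i0 + a := add_pos_of_nonneg_of_pos (hdnn i0) ha
      have hpb : 0 < d i0 + b := add_pos_of_nonneg_of_pos (hdnn i0) hb
      have h1 : (d i0 + b)⁻¹ < (d i0 + a)⁻¹ := by
        apply inv_strictAnti₀ hpa (by linarith)
      have h2 : 0 < (d i0 + b)⁻¹ := inv_pos.mpr hpb
      have h3 : (d i0 + b)⁻¹ * (d i0 + b)⁻¹ < (d i0 + a)⁻¹ * (d i0 + a)⁻¹ :=
        mul_lt_mul'' h1 h1 h2.le h2.le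
      have h4 : 0 < c i0 ^ 2 :=
        lt_of_le_of_ne (sq_nonneg _) (Ne.symm (pow_ne_zero 2 hi0))
      exact mul_lt_mul_of_pos_left h3 h4
  have hgeq : Set.EqOn g G (Set.Ioi (0 : ℝ)) := fun x hx => key x hx
  have hGcont : ContinuousOn G (Set.Ioi (0 : ℝ)) := by
    apply continuousOn_finset_sum
    intro i _
    have hne : ∀ x ∈ Set.Ioi (0 : ℝ), d i + x ≠ 0 := fun x hx =>
      ne_of_gt (add_pos_of_nonneg_of_pos (hdnn i) hx)
    have h1 : ContinuousOn (fun x : ℝ => (d i + x)⁻¹) (Set.Ioi (0 : ℝ)) :=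
      (continuousOn_const.add continuousOn_id).inv₀ hne
    exact continuousOn_const.mul (h1.mul h1)
  have hterm : ∀ i, Filter.Tendsto (fun x : ℝ => c i ^ 2 * ((d i + x)⁻¹ * (d i + x)⁻¹))
      Filter.atTop (nhds 0) := by
    intro i
    have h1 : Filter.Tendsto (fun x : ℝ => (d i + x)⁻¹) Filter.atTop (nhds 0) :=
      tendsto_inv_atTop_zero.comp (Filter.tendsto_atTop_add_const_left _ _ Filter.tendsto_id)
    have := (h1.mul h1).const_mul (c i ^ 2)
    simpa using this
  have hGtend : Filter.Tendsto G Filter.atTop (nhds 0) := by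
    have := tendsto_finset_sum Finset.univ (fun i (_ : i ∈ Finset.univ) => hterm i)
    simpa using this
  have hganti : StrictAntiOn g (Set.Ioi (0 : ℝ)) := by
    intro a ha b hb hab
    rw [hgeq ha, hgeq hb]
    exact hGanti ha hb hab
  refine ⟨?_, hGcont.congr hgeq, hganti, ?_, ?_⟩
  · intro lam hlam
    simp only [Set.mem_Ioi] at hlam
    have hpos : (lam • (1 : Matrix (Fin p) (Fin p) ℝ)).PosDef := by
      rw [smul_one_eq_diagonal]
      exact (posDef_diagonal_iff).mpr fun _ => hlam
    exact isUnit_iff_ne_zero.mpr (Matrix.PosDef.posSemidef_add hA hpos).det_pos.ne'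
  · apply hGtend.congr'
    filter_upwards [Filter.eventually_gt_atTop (0 : ℝ)] with x hx
    exact (key x hx).symm
  · intro lam1 h1 lam2 h2 e1 e2
    rcases lt_trichotomy lam1 lam2 with h | h | h
    · have := hganti h1 h2 h
      rw [e1, e2] at this
      exact absurd this (lt_irrefl 1)
    · exact h
    · have := hganti h2 h1 h
      rw [e1, e2] at this
      exact absurd this (lt_irrefl 1)
end

section
/- Let X be an n×p real matrix, k < p, and Φ ∈ ℝ^{p×k} a matrix with orthonormal columns (ΦᵀΦ = I_k). Let X̂ = X(I_p − ΦΦᵀ) be the deflated exposure matrix. Let c ∈ ℝ, λ ≠ 0, and suppose the matrix c·X̂ᵀX̂ + λ·I_p is invertible. Then for every u ∈ ℝⁿ, the vector φ̂ = (c·X̂ᵀX̂ + λ·I_p)⁻¹·X̂ᵀu satisfies Φᵀφ̂ = 0; that is, φ̂ is orthogonal to every column of Φ. -/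
open Matrix

/-- Orthogonality of the deflated update: if `Φ` has orthonormal columns,
`X̂ = X(I − ΦΦᵀ)` is the deflated exposure matrix, `λ ≠ 0`, and
`c·X̂ᵀX̂ + λ·I` is invertible, then `φ̂ = (c·X̂ᵀX̂ + λ·I)⁻¹·X̂ᵀu` satisfies
`Φᵀφ̂ = 0`, i.e. the new component is orthogonal to the previous ones. -/
theorem pcma_deflation_orthogonality
    {n p k : ℕ} (hk : k < p)
    (X : Matrix (Fin n) (Fin p) ℝ)
    (Φ : Matrix (Fin p) (Fin k) ℝ)
    (hΦ : Φᵀ * Φ = (1 : Matrix (Fin k) (Fin k) ℝ))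
    (Xhat : Matrix (Fin n) (Fin p) ℝ)
    (hXhat : Xhat = X * ((1 : Matrix (Fin p) (Fin p) ℝ) - Φ * Φᵀ))
    (c lam : ℝ) (hlam : lam ≠ 0)
    (hinv : IsUnit (c • (Xhatᵀ * Xhat)
      + lam • (1 : Matrix (Fin p) (Fin p) ℝ)).det)
    (u : Fin n → ℝ) :
    Φᵀ.mulVec ((c • (Xhatᵀ * Xhat)
        + lam • (1 : Matrix (Fin p) (Fin p) ℝ))⁻¹.mulVec (Xhatᵀ.mulVec u))
      = 0 := by
  set M := c • (Xhatᵀ * Xhat) + lam • (1 : Matrix (Fin p) (Fin p) ℝ) with hM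
  have hXhatΦ : Xhat * Φ = 0 := by
    rw [hXhat, Matrix.mul_assoc, Matrix.sub_mul, Matrix.one_mul,
      Matrix.mul_assoc, hΦ, Matrix.mul_one, sub_self, Matrix.mul_zero]
  have hΦX : Φᵀ * Xhatᵀ = 0 := by
    rw [← Matrix.transpose_mul, hXhatΦ, Matrix.transpose_zero]
  have hΦM : Φᵀ * M = lam • Φᵀ := by
    rw [hM, Matrix.mul_add, Matrix.mul_smul, Matrix.mul_smul,
      ← Matrix.mul_assoc, hΦX, Matrix.zero_mul, smul_zero, zero_add,
      Matrix.mul_one]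
  have hΦMinv : Φᵀ * M⁻¹ = lam⁻¹ • Φᵀ := by
    have h1 : Φᵀ = lam⁻¹ • (Φᵀ * M) := by
      rw [hΦM, smul_smul, inv_mul_cancel₀ hlam, one_smul]
    calc Φᵀ * M⁻¹ = (lam⁻¹ • (Φᵀ * M)) * M⁻¹ := by rw [← h1]
      _ = lam⁻¹ • (Φᵀ * (M * M⁻¹)) := by
          rw [Matrix.smul_mul, Matrix.mul_assoc]
      _ = lam⁻¹ • Φᵀ := by rw [Matrix.mul_nonsing_inv _ hinv, Matrix.mul_one]
  rw [Matrix.mulVec_mulVec, hΦMinv, Matrix.smul_mulVec,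
    Matrix.mulVec_mulVec, hΦX, Matrix.zero_mulVec, smul_zero]
end
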